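/- arXiv:math/0604165 — 7 statements merged into one kernel-verified Lean document; each statement's English description precedes it below -/
import Mathlib

section
/- Let (X⁺, σ) be a one-sided symbolic dynamical system over alphabet 𝔞 (X⁺ ⊆ 𝔞^ℕ₀ with σ(X⁺) ⊆ X⁺, where σ is the left shift). Define, for a ∈ 𝔞, D_a = {x ∈ X⁺ : x_0 = a}, D_{a⁻¹} = σ(D_a), θ_a(x) = ax, θ_{a⁻¹}(x) = σ(x), and extend to the free group F(𝔞) by composition along reduced words. Then ((D_g)_{g∈F(𝔞)}, (θ_g)_{g∈F(𝔞)}) is a partial action of F(𝔞) on X⁺. -/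
variable {𝔞 : Type*}

/-- The one-sided shift `σ : 𝔞^ℕ → 𝔞^ℕ`. -/
def shiftSeq (x : ℕ → 𝔞) : ℕ → 𝔞 := fun n => x (n + 1)

/-- Prepending a letter to a one-sided sequence: `x ↦ a x`. -/
def consSeq (a : 𝔞) (x : ℕ → 𝔞) : ℕ → 𝔞 := fun n => Nat.casesOn n a x

/-- The elementary map for a letter `b = (a, true)` (i.e. `a ∈ 𝔞`, the map `x ↦ ax`)
or `b = (a, false)` (i.e. `a⁻¹`, the map `σ`). -/
def letterMap (b : 𝔞 × Bool) : (ℕ → 𝔞) → ℕ → 𝔞 :=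
  if b.2 then consSeq b.1 else shiftSeq

/-- The domain of the elementary map for a letter: `θ_a` has domain
`D_{a⁻¹} = σ(D_a)` and `θ_{a⁻¹} = σ` has domain `D_a = {x ∈ X⁺ : x 0 = a}`. -/
def letterDom (Xp : Set (ℕ → 𝔞)) (b : 𝔞 × Bool) : Set (ℕ → 𝔞) :=
  if b.2 then shiftSeq '' {x ∈ Xp | x 0 = b.1} else {x ∈ Xp | x 0 = b.1}

/-- `θ_{b₁} ∘ θ_{b₂} ∘ ⋯ ∘ θ_{b_k}` for a word `w = b₁b₂⋯b_k`, as a total map. -/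
def wordMap (w : List (𝔞 × Bool)) : (ℕ → 𝔞) → ℕ → 𝔞 :=
  w.foldr (fun b f => letterMap b ∘ f) id

/-- `θ_{b₁}(θ_{b₂}(⋯ θ_{b_k}(X⁺)⋯))` for a word `w = b₁b₂⋯b_k`, where each
`θ_b(S)` means the image of `S` intersected with the domain of `θ_b`. -/
def wordDom (Xp : Set (ℕ → 𝔞)) (w : List (𝔞 × Bool)) : Set (ℕ → 𝔞) :=
  w.foldr (fun b S => letterMap b '' (letterDom Xp b ∩ S)) Xp

variable [DecidableEq 𝔞]

/-- The domain `D_g` for `g` in the free group, via its reduced word. -/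
def dpdsD (Xp : Set (ℕ → 𝔞)) (g : FreeGroup 𝔞) : Set (ℕ → 𝔞) :=
  wordDom Xp g.toWord

/-- The partial one-to-one map `θ_g` for `g` in the free group, via its reduced
word, as a total map (only its restriction to `D_{g⁻¹}` is relevant). -/
def dpdsMap (g : FreeGroup 𝔞) : (ℕ → 𝔞) → ℕ → 𝔞 :=
  wordMap g.toWord

/-- A partial action of a group `G` on a set `X ⊆ Ω`. -/
structure SetPartialAction (G : Type*) [Group G] {Ω : Type*} (X : Set Ω) where
  D : G → Set Ω
  act : G → Ω → Ω
  D_subset : ∀ g, D g ⊆ X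
  D_one : D 1 = X
  act_one : ∀ x ∈ X, act 1 x = x
  bijOn : ∀ g, Set.BijOn (act g) (D g⁻¹) (D g)
  image_inter : ∀ h i, act h '' (D h⁻¹ ∩ D i) = D h ∩ D (h * i)
  comp : ∀ h i x, x ∈ D i⁻¹ ∩ D (i⁻¹ * h⁻¹) → act h (act i x) = act (h * i) x

namespace DPDS

open Set FreeGroup

variable {𝔞 : Type*} {Xp : Set (ℕ → 𝔞)}

/-- Formal inverse of a letter. -/
def inv' (b : 𝔞 × Bool) : 𝔞 × Bool := (b.1, !b.2)

@[simp] lemma inv'_inv' (b : 𝔞 × Bool) : inv' (inv' b) = b := by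
  cases b; simp [inv']

lemma shift_cons (a : 𝔞) (x : ℕ → 𝔞) : shiftSeq (consSeq a x) = x := rfl

lemma cons_shift {a : 𝔞} {x : ℕ → 𝔞} (h : x 0 = a) : consSeq a (shiftSeq x) = x := by
  funext n
  cases n with
  | zero => exact h.symm
  | succ n => rfl

lemma letterDom_subset (hXp : ∀ x ∈ Xp, shiftSeq x ∈ Xp) (b : 𝔞 × Bool) :
    letterDom Xp b ⊆ Xp := by
  obtain ⟨a, c⟩ := b
  cases c with
  | false => intro x hx; exact hx.1
  | true => rintro x ⟨z, hz, rfl⟩; exact hXp z hz.1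

lemma mem_letterDom_inv {b : 𝔞 × Bool} {x : ℕ → 𝔞} (hb : x ∈ letterDom Xp b) :
    letterMap b x ∈ letterDom Xp (inv' b) := by
  obtain ⟨a, c⟩ := b
  cases c with
  | false => exact ⟨x, hb, rfl⟩
  | true =>
    obtain ⟨z, hz, rfl⟩ := hb
    show consSeq a (shiftSeq z) ∈ {x ∈ Xp | x 0 = a}
    rw [cons_shift hz.2]
    exact hz

lemma letterMap_inv_letterMap {b : 𝔞 × Bool} {x : ℕ → 𝔞} (hb : x ∈ letterDom Xp b) :
    letterMap (inv' b) (letterMap b x) = x := by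
  obtain ⟨a, c⟩ := b
  cases c with
  | false => exact cons_shift hb.2
  | true => rfl

lemma letterMap_image (b : 𝔞 × Bool) :
    letterMap b '' letterDom Xp b = letterDom Xp (inv' b) := by
  ext y
  constructor
  · rintro ⟨x, hx, rfl⟩; exact mem_letterDom_inv hx
  · intro hy
    refine ⟨letterMap (inv' b) y, ?_, ?_⟩
    · have := mem_letterDom_inv (b := inv' b) hy; rwa [inv'_inv'] at this
    · have := letterMap_inv_letterMap (b := inv' b) hy; rwa [inv'_inv'] at this

lemma letterMap_image_inter (b : 𝔞 × Bool) (S : Set (ℕ → 𝔞)) :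
    letterMap b '' (letterDom Xp b ∩ S)
      = letterDom Xp (inv' b) ∩ letterMap (inv' b) ⁻¹' S := by
  ext y
  constructor
  · rintro ⟨x, ⟨hx, hxS⟩, rfl⟩
    refine ⟨mem_letterDom_inv hx, ?_⟩
    show letterMap (inv' b) (letterMap b x) ∈ S
    rw [letterMap_inv_letterMap hx]; exact hxS
  · rintro ⟨hy, hS⟩
    refine ⟨letterMap (inv' b) y, ⟨?_, hS⟩, ?_⟩
    · have := mem_letterDom_inv (b := inv' b) hy; rwa [inv'_inv'] at this
    · have := letterMap_inv_letterMap (b := inv' b) hy; rwa [inv'_inv'] at this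

lemma wordMap_cons (b : 𝔞 × Bool) (t : List (𝔞 × Bool)) (x : ℕ → 𝔞) :
    wordMap (b :: t) x = letterMap b (wordMap t x) := rfl

lemma wordMap_append (u v : List (𝔞 × Bool)) (x : ℕ → 𝔞) :
    wordMap (u ++ v) x = wordMap u (wordMap v x) := by
  induction u with
  | nil => rfl
  | cons b t ih => simp only [List.cons_append, wordMap_cons, ih]

/-- `wordDom` with a general base set. -/
def wDomF (Xp : Set (ℕ → 𝔞)) (S : Set (ℕ → 𝔞)) (w : List (𝔞 × Bool)) : Set (ℕ → 𝔞) :=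
  w.foldr (fun b T => letterMap b '' (letterDom Xp b ∩ T)) S

lemma wordDom_eq (w : List (𝔞 × Bool)) : wordDom Xp w = wDomF Xp Xp w := rfl

lemma wDomF_append (S : Set (ℕ → 𝔞)) (u v : List (𝔞 × Bool)) :
    wDomF Xp S (u ++ v) = wDomF Xp (wDomF Xp S v) u :=
  List.foldr_append ..

lemma wDomF_subset (hXp : ∀ x ∈ Xp, shiftSeq x ∈ Xp) {S : Set (ℕ → 𝔞)} (hS : S ⊆ Xp)
    (w : List (𝔞 × Bool)) : wDomF Xp S w ⊆ Xp := by
  cases w with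
  | nil => exact hS
  | cons b t =>
    rintro y ⟨x, ⟨hx, _⟩, rfl⟩
    exact letterDom_subset hXp _ (mem_letterDom_inv hx)

lemma wordDom_subset (hXp : ∀ x ∈ Xp, shiftSeq x ∈ Xp) (w : List (𝔞 × Bool)) :
    wordDom Xp w ⊆ Xp :=
  wDomF_subset hXp (fun _ h => h) w

lemma invRev_cons (b : 𝔞 × Bool) (t : List (𝔞 × Bool)) :
    invRev (b :: t) = invRev t ++ [inv' b] := by
  simp [invRev, inv']

lemma invRev_singleton (b : 𝔞 × Bool) : invRev [b] = [inv' b] := by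
  simp [invRev, inv']

lemma invRev_append' (u v : List (𝔞 × Bool)) :
    invRev (u ++ v) = invRev v ++ invRev u := by
  simp [invRev]

/-- The central lemma: membership in the fold with general base. -/
lemma wDomF_invRev (hXp : ∀ x ∈ Xp, shiftSeq x ∈ Xp) :
    ∀ (v : List (𝔞 × Bool)) (T : Set (ℕ → 𝔞)), T ⊆ Xp →
      wDomF Xp T (invRev v) = {x | x ∈ wordDom Xp (invRev v) ∧ wordMap v x ∈ T} := by
  intro v
  induction v with
  | nil =>
    intro T hT
    ext x
    simp only [invRev_empty, wDomF, List.foldr_nil, mem_setOf_eq]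
    exact ⟨fun h => ⟨hT h, h⟩, fun h => h.2⟩
  | cons b t ih =>
    intro T hT
    have hsing : ∀ (T' : Set (ℕ → 𝔞)),
        wDomF Xp T' [inv' b] = letterDom Xp b ∩ letterMap b ⁻¹' T' := by
      intro T'
      show letterMap (inv' b) '' (letterDom Xp (inv' b) ∩ T') = _
      rw [letterMap_image_inter, inv'_inv']
    have hbase : ∀ (T' : Set (ℕ → 𝔞)),
        wDomF Xp T' (invRev (b :: t)) = wDomF Xp (letterDom Xp b ∩ letterMap b ⁻¹' T') (invRev t) := by
      intro T'
      rw [invRev_cons, wDomF_append, hsing]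
    have hsub : ∀ (T' : Set (ℕ → 𝔞)), letterDom Xp b ∩ letterMap b ⁻¹' T' ⊆ Xp :=
      fun T' => (Set.inter_subset_left).trans (letterDom_subset hXp b)
    have hXpd : wordDom Xp (invRev (b :: t))
        = {x | x ∈ wordDom Xp (invRev t) ∧ wordMap t x ∈ letterDom Xp b ∩ letterMap b ⁻¹' Xp} := by
      rw [wordDom_eq, hbase Xp, ih _ (hsub Xp)]
    rw [hbase T, ih _ (hsub T)]
    ext x
    simp only [mem_setOf_eq, hXpd, Set.mem_inter_iff, Set.mem_preimage, wordMap_cons]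
    constructor
    · rintro ⟨h1, h2, h3⟩
      exact ⟨⟨h1, h2, letterDom_subset hXp _ (mem_letterDom_inv h2)⟩, h3⟩
    · rintro ⟨⟨h1, h2, _⟩, h3⟩
      exact ⟨h1, h2, h3⟩

lemma mem_dom_append (hXp : ∀ x ∈ Xp, shiftSeq x ∈ Xp) (u v : List (𝔞 × Bool)) (x : ℕ → 𝔞) :
    x ∈ wordDom Xp (invRev (u ++ v))
      ↔ x ∈ wordDom Xp (invRev v) ∧ wordMap v x ∈ wordDom Xp (invRev u) := by
  rw [invRev_append', wordDom_eq, wDomF_append, ← wordDom_eq,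
    wDomF_invRev hXp v _ (wordDom_subset hXp _)]
  exact Iff.rfl

lemma dom_singleton (hXp : ∀ x ∈ Xp, shiftSeq x ∈ Xp) (b : 𝔞 × Bool) :
    wordDom Xp (invRev [b]) = letterDom Xp b := by
  rw [invRev_singleton]
  show letterMap (inv' b) '' (letterDom Xp (inv' b) ∩ Xp) = _
  rw [Set.inter_eq_self_of_subset_left (letterDom_subset hXp _), letterMap_image, inv'_inv']

lemma mem_dom_cons (hXp : ∀ x ∈ Xp, shiftSeq x ∈ Xp) (b : 𝔞 × Bool) (t : List (𝔞 × Bool))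
    (x : ℕ → 𝔞) :
    x ∈ wordDom Xp (invRev (b :: t))
      ↔ x ∈ wordDom Xp (invRev t) ∧ wordMap t x ∈ letterDom Xp b := by
  have : b :: t = [b] ++ t := rfl
  rw [this, mem_dom_append hXp, dom_singleton hXp]

lemma wordMap_image (hXp : ∀ x ∈ Xp, shiftSeq x ∈ Xp) :
    ∀ v : List (𝔞 × Bool), wordMap v '' wordDom Xp (invRev v) = wordDom Xp v := by
  intro v
  induction v with
  | nil =>
    rw [invRev_empty]
    exact Set.image_id _
  | cons b t ih =>
    ext y
    constructor
    · rintro ⟨x, hx, rfl⟩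
      rw [mem_dom_cons hXp] at hx
      refine ⟨wordMap t x, ⟨hx.2, ?_⟩, rfl⟩
      show wordMap t x ∈ wordDom Xp t
      rw [← ih]
      exact Set.mem_image_of_mem _ hx.1
    · rintro ⟨z, ⟨hz1, hz2⟩, rfl⟩
      have hz2' : z ∈ wordDom Xp t := hz2
      rw [← ih] at hz2'
      obtain ⟨x, hx, rfl⟩ := hz2'
      exact ⟨x, (mem_dom_cons hXp b t x).2 ⟨hx, hz1⟩, rfl⟩

lemma wordMap_mapsTo (hXp : ∀ x ∈ Xp, shiftSeq x ∈ Xp) (v : List (𝔞 × Bool)) {x : ℕ → 𝔞}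
    (hx : x ∈ wordDom Xp (invRev v)) : wordMap v x ∈ wordDom Xp v :=
  wordMap_image hXp v ▸ Set.mem_image_of_mem _ hx

lemma wordMap_leftInv (hXp : ∀ x ∈ Xp, shiftSeq x ∈ Xp) :
    ∀ (v : List (𝔞 × Bool)) (x : ℕ → 𝔞), x ∈ wordDom Xp (invRev v) →
      wordMap (invRev v) (wordMap v x) = x := by
  intro v
  induction v with
  | nil => intro x _; rfl
  | cons b t ih =>
    intro x hx
    rw [mem_dom_cons hXp] at hx
    have h0 : wordMap (b :: t) x = letterMap b (wordMap t x) := rfl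
    rw [h0, invRev_cons, wordMap_append]
    have h1 : wordMap [inv' b] (letterMap b (wordMap t x)) = wordMap t x :=
      letterMap_inv_letterMap hx.2
    rw [h1]
    exact ih x hx.1

lemma wordMap_rightInv (hXp : ∀ x ∈ Xp, shiftSeq x ∈ Xp) (v : List (𝔞 × Bool)) (y : ℕ → 𝔞)
    (hy : y ∈ wordDom Xp v) : wordMap v (wordMap (invRev v) y) = y := by
  have := wordMap_leftInv hXp (invRev v) y (by rwa [invRev_invRev])
  rwa [invRev_invRev] at this

lemma wordMap_bijOn (hXp : ∀ x ∈ Xp, shiftSeq x ∈ Xp) (v : List (𝔞 × Bool)) :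
    Set.BijOn (wordMap v) (wordDom Xp (invRev v)) (wordDom Xp v) := by
  refine ⟨fun x hx => wordMap_mapsTo hXp v hx, ?_, ?_⟩
  · intro x1 h1 x2 h2 he
    have := wordMap_leftInv hXp v x1 h1
    rw [he, wordMap_leftInv hXp v x2 h2] at this
    exact this.symm
  · intro y hy
    rw [← wordMap_image hXp v] at hy
    exact hy

lemma step_dom (hXp : ∀ x ∈ Xp, shiftSeq x ∈ Xp) {w w' : List (𝔞 × Bool)}
    (h : FreeGroup.Red.Step w w') (x : ℕ → 𝔞) (hx : x ∈ wordDom Xp (invRev w)) :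
    x ∈ wordDom Xp (invRev w') ∧ wordMap w x = wordMap w' x := by
  cases h with
  | @not L₁ L₂ a c =>
    have hinv : (a, !c) = inv' (a, c) := rfl
    rw [mem_dom_append hXp L₁ ((a,c) :: (a,!c) :: L₂), mem_dom_cons hXp,
      mem_dom_cons hXp] at hx
    obtain ⟨⟨⟨h1, h2⟩, h3⟩, h4⟩ := hx
    -- h2 : wordMap L₂ x ∈ letterDom Xp (a, !c)
    have hkey : letterMap (a, c) (letterMap (a, !c) (wordMap L₂ x)) = wordMap L₂ x := by
      have := letterMap_inv_letterMap (b := (a, !c)) h2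
      have h5 : inv' (a, !c) = (a, c) := by simp [inv']
      rwa [h5] at this
    have hmapeq : wordMap ((a,c) :: (a,!c) :: L₂) x = wordMap L₂ x := by
      rw [wordMap_cons, wordMap_cons, hkey]
    constructor
    · rw [mem_dom_append hXp]
      refine ⟨h1, ?_⟩
      rwa [hmapeq] at h4
    · rw [wordMap_append, wordMap_append, hmapeq]

lemma red_dom (hXp : ∀ x ∈ Xp, shiftSeq x ∈ Xp) {w w' : List (𝔞 × Bool)}
    (h : FreeGroup.Red w w') (x : ℕ → 𝔞) (hx : x ∈ wordDom Xp (invRev w)) :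
    x ∈ wordDom Xp (invRev w') ∧ wordMap w x = wordMap w' x := by
  induction h with
  | refl => exact ⟨hx, rfl⟩
  | tail _ h2 ih =>
    obtain ⟨hx1, he1⟩ := ih
    obtain ⟨hx2, he2⟩ := step_dom hXp h2 x hx1
    exact ⟨hx2, he1.trans he2⟩

/-- "No cancellation": the word contains no adjacent inverse pair. -/
def NC (w : List (𝔞 × Bool)) : Prop :=
  ∀ (p : List (𝔞 × Bool)) (a : 𝔞) (c : Bool) (q : List (𝔞 × Bool)),
    w ≠ p ++ (a, c) :: (a, !c) :: q

lemma NC_toWord [DecidableEq 𝔞] (g : FreeGroup 𝔞) : NC g.toWord :=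
  fun _ _ _ _ h => FreeGroup.reduce.not ((FreeGroup.reduce_toWord g).trans h)

lemma NC_append_left {u v : List (𝔞 × Bool)} (h : NC (u ++ v)) : NC u :=
  fun p a c q hu => h p a c (q ++ v) (by rw [hu]; simp)

lemma NC_append_right {u v : List (𝔞 × Bool)} (h : NC (u ++ v)) : NC v :=
  fun p a c q hv => h (u ++ p) a c q (by rw [hv]; simp)

lemma reduce_eq_self_of_NC [DecidableEq 𝔞] {w : List (𝔞 × Bool)} (h : NC w) :
    FreeGroup.reduce w = w := by
  rcases Relation.ReflTransGen.cases_head (FreeGroup.reduce.red (L := w)) with he | ⟨c, hstep, _⟩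
  · exact he.symm
  · exfalso
    cases hstep with
    | @not L₁ L₂ a c => exact h L₁ a c L₂ rfl

lemma NC_append {u v₁ : List (𝔞 × Bool)} {c : 𝔞 × Bool} (hu : NC u) (hv : NC (c :: v₁))
    (hj : ∀ u', u ≠ u' ++ [inv' c]) : NC (u ++ c :: v₁) := by
  intro p a d q h
  rw [List.append_eq_append_iff] at h
  rcases h with ⟨r, _, hb⟩ | ⟨r, hu', hd⟩
  · exact hv r a d q hb
  · rcases r with _ | ⟨r0, r'⟩
    · rw [List.nil_append] at hd
      exact hv [] a d q hd.symm
    · rcases r' with _ | ⟨r1, r''⟩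
      · rw [List.cons_append, List.nil_append] at hd
        obtain ⟨h0, h1⟩ := List.cons_eq_cons.mp hd
        obtain ⟨h2, _⟩ := List.cons_eq_cons.mp h1
        apply hj p
        rw [hu', ← h0, ← h2]
        simp [inv']
      · rw [List.cons_append, List.cons_append] at hd
        obtain ⟨h0, h1⟩ := List.cons_eq_cons.mp hd
        obtain ⟨h2, _⟩ := List.cons_eq_cons.mp h1
        exact hu p a d r'' (by rw [hu', ← h0, ← h2])

lemma hard_sup [DecidableEq 𝔞] (hXp : ∀ x ∈ Xp, shiftSeq x ∈ Xp) :
    ∀ (n : ℕ) (u v : List (𝔞 × Bool)), u.length ≤ n → NC u → NC v →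
      wordDom Xp (invRev v) ∩ wordDom Xp (invRev (FreeGroup.reduce (u ++ v)))
        ⊆ wordDom Xp (invRev (u ++ v)) := by
  intro n
  induction n with
  | zero =>
    intro u v hlen hu hv
    rw [List.length_eq_zero_iff.mp (Nat.le_zero.mp hlen)]
    rw [List.nil_append, reduce_eq_self_of_NC hv]
    exact Set.inter_subset_right
  | succ n ih =>
    intro u v hlen hu hv
    cases v with
    | nil =>
      rw [List.append_nil, reduce_eq_self_of_NC hu]
      exact Set.inter_subset_right
    | cons c v₁ =>
      by_cases hc : ∃ u', u = u' ++ [inv' c]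
      · obtain ⟨u', rfl⟩ := hc
        have hgoal : FreeGroup.Red.Step (u' ++ [inv' c] ++ c :: v₁) (u' ++ v₁) := by
          have hstep := @FreeGroup.Red.Step.not 𝔞 u' v₁ c.1 (!c.2)
          have hcc : (c.1, !!c.2) = c := by simp
          rw [hcc] at hstep
          simpa [inv'] using hstep
        have hred : FreeGroup.reduce (u' ++ [inv' c] ++ c :: v₁) = FreeGroup.reduce (u' ++ v₁) :=
          FreeGroup.reduce.Step.eq hgoal
        intro x hx
        obtain ⟨hxv, hxr⟩ := hx
        rw [hred] at hxr
        rw [mem_dom_cons hXp] at hxv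
        obtain ⟨hx1, hx2⟩ := hxv
        have hu' : NC u' := NC_append_left hu
        have hv₁ : NC v₁ := NC_append_right (u := [c]) hv
        have hlen' : u'.length ≤ n := by
          have := hlen
          simp only [List.length_append, List.length_singleton] at this
          omega
        have hxid : x ∈ wordDom Xp (invRev (u' ++ v₁)) :=
          ih u' v₁ hlen' hu' hv₁ ⟨hx1, hxr⟩
        rw [mem_dom_append hXp] at hxid
        rw [mem_dom_append hXp]
        refine ⟨(mem_dom_cons hXp c v₁ x).2 ⟨hx1, hx2⟩, ?_⟩
        rw [mem_dom_append hXp]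
        have hWc : wordMap (c :: v₁) x = letterMap c (wordMap v₁ x) := rfl
        rw [hWc, dom_singleton hXp]
        refine ⟨mem_letterDom_inv hx2, ?_⟩
        have : wordMap [inv' c] (letterMap c (wordMap v₁ x)) = wordMap v₁ x := by
          show letterMap (inv' c) (letterMap c (wordMap v₁ x)) = wordMap v₁ x
          exact letterMap_inv_letterMap hx2
        rw [this]
        exact hxid.2
      · push_neg at hc
        have hnc : NC (u ++ c :: v₁) := NC_append hu hv hc
        rw [reduce_eq_self_of_NC hnc]
        exact Set.inter_subset_right

end DPDS

/-- For a one-sided symbolic dynamical system `(X⁺, σ)`, the families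
`(D_g)_{g ∈ F(𝔞)}` and `(θ_g)_{g ∈ F(𝔞)}` constructed from the elementary maps
`θ_a : x ↦ ax` and `θ_{a⁻¹} = σ` form a partial action of `F(𝔞)` on `X⁺`. -/
theorem stmt1 (Xp : Set (ℕ → 𝔞)) (hXp : ∀ x ∈ Xp, shiftSeq x ∈ Xp) :
    ∃ P : SetPartialAction (FreeGroup 𝔞) Xp,
      P.D = dpdsD Xp ∧ P.act = dpdsMap := by

  have tm : ∀ h i : FreeGroup 𝔞, (h * i).toWord = FreeGroup.reduce (h.toWord ++ i.toWord) := by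
    intro h i
    have hmk : h * i = FreeGroup.mk (h.toWord ++ i.toWord) := by
      rw [← FreeGroup.mul_mk, FreeGroup.mk_toWord, FreeGroup.mk_toWord]
    rw [hmk, FreeGroup.toWord_mk]
  refine ⟨⟨dpdsD Xp, dpdsMap, ?_, ?_, ?_, ?_, ?_, ?_⟩, rfl, rfl⟩
  · intro g
    exact DPDS.wordDom_subset hXp _
  · show wordDom Xp (1 : FreeGroup 𝔞).toWord = Xp
    rw [FreeGroup.toWord_one]
    rfl
  · intro x _
    show wordMap (1 : FreeGroup 𝔞).toWord x = x
    rw [FreeGroup.toWord_one]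
    rfl
  · intro g
    show Set.BijOn (wordMap g.toWord) (wordDom Xp (g⁻¹).toWord) (wordDom Xp g.toWord)
    rw [FreeGroup.toWord_inv]
    exact DPDS.wordMap_bijOn hXp _
  · intro h i
    show wordMap h.toWord '' (wordDom Xp (h⁻¹ : FreeGroup 𝔞).toWord ∩ wordDom Xp i.toWord)
      = wordDom Xp h.toWord ∩ wordDom Xp (h * i).toWord
    rw [FreeGroup.toWord_inv, tm h i]
    ext y
    constructor
    · rintro ⟨x, ⟨hx1, hx2⟩, rfl⟩
      refine ⟨DPDS.wordMap_mapsTo hXp h.toWord hx1, ?_⟩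
      rw [← DPDS.wordMap_image hXp i.toWord] at hx2
      obtain ⟨z, hz, rfl⟩ := hx2
      have hzd : z ∈ wordDom Xp (FreeGroup.invRev (h.toWord ++ i.toWord)) :=
        (DPDS.mem_dom_append hXp h.toWord i.toWord z).2 ⟨hz, hx1⟩
      have hred := DPDS.red_dom hXp (FreeGroup.reduce.red (L := h.toWord ++ i.toWord)) z hzd
      rw [← DPDS.wordMap_append h.toWord i.toWord z, hred.2]
      exact DPDS.wordMap_mapsTo hXp _ hred.1
    · rintro ⟨hy1, hy2⟩
      have hy1' : y ∈ wordDom Xp (FreeGroup.invRev (FreeGroup.invRev h.toWord)) := by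
        rwa [FreeGroup.invRev_invRev]
      have hy2' : y ∈ wordDom Xp
          (FreeGroup.invRev (FreeGroup.reduce (FreeGroup.invRev i.toWord ++ FreeGroup.invRev h.toWord))) := by
        have heq : FreeGroup.invRev
            (FreeGroup.reduce (FreeGroup.invRev i.toWord ++ FreeGroup.invRev h.toWord))
            = FreeGroup.reduce (h.toWord ++ i.toWord) := by
          rw [← DPDS.invRev_append', FreeGroup.reduce_invRev, FreeGroup.invRev_invRev]
        rwa [heq]
      have hNCu : DPDS.NC (FreeGroup.invRev i.toWord) := by
        rw [← FreeGroup.toWord_inv]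
        exact DPDS.NC_toWord i⁻¹
      have hNCv : DPDS.NC (FreeGroup.invRev h.toWord) := by
        rw [← FreeGroup.toWord_inv]
        exact DPDS.NC_toWord h⁻¹
      have hmem := DPDS.hard_sup hXp (FreeGroup.invRev i.toWord).length
        (FreeGroup.invRev i.toWord) (FreeGroup.invRev h.toWord) le_rfl hNCu hNCv ⟨hy1', hy2'⟩
      rw [DPDS.mem_dom_append hXp] at hmem
      obtain ⟨hm1, hm2⟩ := hmem
      refine ⟨wordMap (FreeGroup.invRev h.toWord) y, ⟨?_, ?_⟩, ?_⟩
      · exact DPDS.wordMap_mapsTo hXp (FreeGroup.invRev h.toWord) hy1'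
      · rwa [FreeGroup.invRev_invRev] at hm2
      · exact DPDS.wordMap_rightInv hXp h.toWord y hy1
  · intro h i x hx
    obtain ⟨hx1, hx2⟩ := hx
    have hx1' : x ∈ wordDom Xp (FreeGroup.invRev i.toWord) := by
      rw [← FreeGroup.toWord_inv]
      exact hx1
    have hx2' : x ∈ wordDom Xp (FreeGroup.invRev (FreeGroup.reduce (h.toWord ++ i.toWord))) := by
      rw [← tm h i, ← FreeGroup.toWord_inv, mul_inv_rev]
      exact hx2
    have hmem := DPDS.hard_sup hXp h.toWord.length h.toWord i.toWord le_rfl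
      (DPDS.NC_toWord h) (DPDS.NC_toWord i) ⟨hx1', hx2'⟩
    have hred := DPDS.red_dom hXp (FreeGroup.reduce.red (L := h.toWord ++ i.toWord)) x hmem
    show wordMap h.toWord (wordMap i.toWord x) = wordMap (h * i).toWord x
    calc wordMap h.toWord (wordMap i.toWord x)
        = wordMap (h.toWord ++ i.toWord) x := (DPDS.wordMap_append _ _ x).symm
      _ = wordMap (FreeGroup.reduce (h.toWord ++ i.toWord)) x := hred.2
      _ = wordMap (h * i).toWord x := by rw [tm]
end

section
/- Let (X⁺, θ, F(𝔞)) be the discrete partial dynamical system associated to a one-sided symbolic dynamical system. If g ∈ F(𝔞) and the domain D_g is nonempty, then there exist finite words μ, ν ∈ 𝔞* such that g = μν⁻¹ in F(𝔞). -/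
variable {𝔞 : Type*}

/-- Prepending a finite word `μ` to a one-sided sequence: `x ↦ μ x`. -/
def wordCons : List 𝔞 → (ℕ → 𝔞) → ℕ → 𝔞
  | [], x => x
  | a :: μ, x => consSeq a (wordCons μ x)

variable [DecidableEq 𝔞]

/-- The embedding of finite words into the free group (the positive cone). -/
def embWord (μ : List 𝔞) : FreeGroup 𝔞 :=
  FreeGroup.mk (μ.map fun a => (a, true))


/-- A point of the domain of a word starting with `(a, true)` begins with `a`. -/
lemma wordDom_cons_true_head {Xp : Set (ℕ → 𝔞)} {a : 𝔞} {w : List (𝔞 × Bool)}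
    {x : ℕ → 𝔞} (hx : x ∈ wordDom Xp ((a, true) :: w)) : x 0 = a := by
  simp only [wordDom, List.foldr_cons] at hx
  obtain ⟨y, -, rfl⟩ := hx
  simp [letterMap, consSeq]

/-- No adjacent `(a, false)(a, true)` pair in a word with nonempty domain. -/
lemma wordDom_false_true {Xp : Set (ℕ → 𝔞)} {a b : 𝔞} {w : List (𝔞 × Bool)}
    (h : (wordDom Xp ((a, false) :: (b, true) :: w)).Nonempty) : a = b := by
  obtain ⟨x, hx⟩ := h
  simp only [wordDom, List.foldr_cons] at hx
  obtain ⟨y, ⟨hy1, hy2⟩, -⟩ := hx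
  simp only [letterDom, if_neg (by simp : ¬(a, false).2 = true), Set.mem_setOf_eq] at hy1
  have : y 0 = b := wordDom_cons_true_head (Xp := Xp) (w := w) hy2
  rw [← hy1.2, this]

/-- Nonemptiness of the domain passes to tails. -/
lemma wordDom_tail {Xp : Set (ℕ → 𝔞)} {b : 𝔞 × Bool} {w : List (𝔞 × Bool)}
    (h : (wordDom Xp (b :: w)).Nonempty) : (wordDom Xp w).Nonempty := by
  obtain ⟨x, hx⟩ := h
  simp only [wordDom, List.foldr_cons] at hx
  obtain ⟨y, ⟨-, hy⟩, -⟩ := hx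
  exact ⟨y, hy⟩

/-- Main combinatorial lemma: a word with nonempty domain and no forbidden
`(a, false)(a, true)` pairs splits as positives followed by negatives. -/
lemma wordDom_split (Xp : Set (ℕ → 𝔞)) :
    ∀ w : List (𝔞 × Bool),
      (∀ a : 𝔞, ∀ L₂ L₃ : List (𝔞 × Bool),
        w ≠ L₂ ++ (a, false) :: (a, true) :: L₃) →
      (wordDom Xp w).Nonempty →
      ∃ μ ν : List 𝔞, w = (μ.map fun a => (a, true)) ++ (ν.map fun a => (a, false))
  | [], _, _ => ⟨[], [], rfl⟩
  | (a, true) :: w, hred, hne => by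
    obtain ⟨μ, ν, hw⟩ := wordDom_split Xp w
      (fun c L₂ L₃ h => hred c ((a, true) :: L₂) L₃ (by rw [h]; rfl))
      (wordDom_tail hne)
    exact ⟨a :: μ, ν, by simp [hw]⟩
  | (a, false) :: w, hred, hne => by
    obtain ⟨μ, ν, hw⟩ := wordDom_split Xp w
      (fun c L₂ L₃ h => hred c ((a, false) :: L₂) L₃ (by rw [h]; rfl))
      (wordDom_tail hne)
    cases μ with
    | nil => exact ⟨[], a :: ν, by simp [hw]⟩
    | cons b μ =>
      exfalso
      rw [hw] at hne
      have hab : a = b := wordDom_false_true (by simpa using hne)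
      exact hred b [] _ (by rw [hw, hab]; rfl)

/-- If `D_g ≠ ∅` for `g ∈ F(𝔞)`, then `g = μν⁻¹` for some finite words
`μ, ν ∈ 𝔞*`. -/
theorem stmt3 (Xp : Set (ℕ → 𝔞)) (hXp : ∀ x ∈ Xp, shiftSeq x ∈ Xp)
    (g : FreeGroup 𝔞) (hg : (dpdsD Xp g).Nonempty) :
    ∃ μ ν : List 𝔞, g = embWord μ * (embWord ν)⁻¹ := by
  obtain ⟨μ, ν, hw⟩ := wordDom_split Xp g.toWord
    (fun a L₂ L₃ h => FreeGroup.reduce.not (L₁ := g.toWord) (L₂ := L₂) (L₃ := L₃) (x := a) (b := false)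
      (by rw [FreeGroup.reduce_toWord]; exact h))
    hg
  refine ⟨μ, ν.reverse, ?_⟩
  have h1 : (embWord ν.reverse)⁻¹ = FreeGroup.mk (ν.map fun a => (a, false)) := by
    rw [embWord, FreeGroup.inv_mk, FreeGroup.invRev]
    congr 1
    simp [List.map_reverse, List.map_map, Function.comp_def]
  rw [h1, embWord, FreeGroup.mul_mk, ← hw, FreeGroup.mk_toWord]
end

section
/- Let (X, τ) be a two-sided symbolic dynamical system and (X, θ, F(𝔞)) its associated discrete partial dynamical system. If g ∈ F(𝔞) and D_g ≠ ∅, then either g ∈ 𝔞* or g⁻¹ ∈ 𝔞* (i.e., g or its inverse lies in the positive cone of the free group). -/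
variable {𝔞 : Type*}

/-- The two-sided shift `τ : 𝔞^ℤ → 𝔞^ℤ`, `(τ z)_m = z_{m+1}`. -/
def tshift (z : ℤ → 𝔞) : ℤ → 𝔞 := fun n => z (n + 1)

/-- The inverse shift `τ⁻¹`. -/
def tshiftInv (z : ℤ → 𝔞) : ℤ → 𝔞 := fun n => z (n - 1)

/-- The elementary map for a letter `(a, true)` (i.e. `θ_a = τ⁻¹` restricted to
`D_{a⁻¹}`) or `(a, false)` (i.e. `θ_{a⁻¹} = τ` restricted to `D_a`). -/
def tletterMap (b : 𝔞 × Bool) : (ℤ → 𝔞) → ℤ → 𝔞 :=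
  if b.2 then tshiftInv else tshift

/-- The domain of the elementary map for a letter: `θ_a` has domain
`D_{a⁻¹} = {z ∈ X : z_{-1} = a}`, and `θ_{a⁻¹}` has domain
`D_a = {z ∈ X : z_0 = a}`. -/
def tletterDom (X : Set (ℤ → 𝔞)) (b : 𝔞 × Bool) : Set (ℤ → 𝔞) :=
  if b.2 then {z ∈ X | z (-1) = b.1} else {z ∈ X | z 0 = b.1}

/-- `θ_{b₁} ∘ θ_{b₂} ∘ ⋯ ∘ θ_{b_k}` for a word `w = b₁b₂⋯b_k`, as a total map. -/
def twordMap (w : List (𝔞 × Bool)) : (ℤ → 𝔞) → ℤ → 𝔞 :=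
  w.foldr (fun b f => tletterMap b ∘ f) id

/-- `θ_{b₁}(θ_{b₂}(⋯ θ_{b_k}(X)⋯))` for a word `w = b₁b₂⋯b_k`. -/
def twordDom (X : Set (ℤ → 𝔞)) (w : List (𝔞 × Bool)) : Set (ℤ → 𝔞) :=
  w.foldr (fun b S => tletterMap b '' (tletterDom X b ∩ S)) X

variable [DecidableEq 𝔞]

/-- The domain `D_g` for `g` in the free group, via its reduced word. -/
def tD (X : Set (ℤ → 𝔞)) (g : FreeGroup 𝔞) : Set (ℤ → 𝔞) :=
  twordDom X g.toWord

/-- The partial map `θ_g` for `g` in the free group, via its reduced word. -/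
def tMap (g : FreeGroup 𝔞) : (ℤ → 𝔞) → ℤ → 𝔞 :=
  twordMap g.toWord

/-!
A letter `θ_b` deposits the symbol it reads in its domain at the coordinate read by the inverse
letter `θ_{b⁻¹}` (`τ⁻¹` moves `z_{-1}` to `z_0`, `τ` moves `z_0` to `z_{-1}`). So if two adjacent
letters of a word with non-empty domain have opposite signs, they carry the same symbol and
cancel. The reduced word of `g` thus has letters of a single sign when `D_g ≠ ∅`, which puts `g`
or `g⁻¹` in `𝔞*`.
-/

section

omit [DecidableEq 𝔞]

def tletterCoord (s : Bool) : ℤ := if s then -1 else 0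

theorem tletterDom_eq (X : Set (ℤ → 𝔞)) (b : 𝔞 × Bool) :
    tletterDom X b = {z ∈ X | z (tletterCoord b.2) = b.1} := by
  obtain ⟨a, s⟩ := b
  cases s <;> rfl

theorem tletterMap_apply_tletterCoord_not (a : 𝔞) (s : Bool) (y : ℤ → 𝔞) :
    tletterMap (a, s) y (tletterCoord !s) = y (tletterCoord s) := by
  cases s <;> simp [tletterMap, tletterCoord, tshift, tshiftInv]

theorem twordDom_cons_nonempty {X : Set (ℤ → 𝔞)} {b : 𝔞 × Bool} {w : List (𝔞 × Bool)}
    (h : (twordDom X (b :: w)).Nonempty) : (twordDom X w).Nonempty := by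
  obtain ⟨_, y, ⟨_, hy⟩, _⟩ := h
  exact ⟨y, hy⟩

theorem fst_eq_of_twordDom_cons_cons_nonempty {X : Set (ℤ → 𝔞)} {b c : 𝔞 × Bool}
    {w : List (𝔞 × Bool)} (h : (twordDom X (b :: c :: w)).Nonempty) (hbc : b.2 = !c.2) :
    b.1 = c.1 := by
  obtain ⟨a, s⟩ := c
  obtain ⟨_, _, ⟨hyb, y, ⟨hyc, _⟩, rfl⟩, _⟩ := h
  rw [tletterDom_eq, hbc] at hyb
  rw [tletterDom_eq] at hyc
  rw [← hyb.2, tletterMap_apply_tletterCoord_not, hyc.2]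

theorem FreeGroup.IsReduced.isChain_snd_of_twordDom_nonempty {X : Set (ℤ → 𝔞)}
    {w : List (𝔞 × Bool)} (hw : FreeGroup.IsReduced w) (h : (twordDom X w).Nonempty) :
    w.IsChain fun b c => b.2 = c.2 := by
  induction hw with
  | nil => exact .nil
  | singleton b => exact .singleton b
  | @cons_cons b c w hbc _ ih =>
    refine .cons_cons ?_ (ih (twordDom_cons_nonempty h))
    by_contra hne
    exact hne (hbc (fst_eq_of_twordDom_cons_cons_nonempty h (Bool.eq_not_iff.2 hne)))

theorem List.IsChain.exists_forall_snd_eq {w : List (𝔞 × Bool)}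
    (h : w.IsChain fun b c => b.2 = c.2) : ∃ s, ∀ b ∈ w, b.2 = s := by
  cases w with
  | nil => exact ⟨true, by simp⟩
  | cons b w =>
    refine ⟨b.2, fun c hc => ?_⟩
    have hrep := List.isChain_cons_eq_iff_eq_replicate.1 ((List.isChain_map Prod.snd).2 h)
    rcases List.mem_cons.1 hc with rfl | hc
    · rfl
    · exact List.eq_of_mem_replicate (hrep ▸ List.mem_map_of_mem hc)

theorem FreeGroup.mk_eq_embWord {L : List (𝔞 × Bool)} (h : ∀ b ∈ L, b.2 = true) :
    FreeGroup.mk L = embWord (L.map Prod.fst) := by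
  rw [embWord, List.map_map]
  congr 1
  conv_lhs => rw [← List.map_id L]
  exact List.map_congr_left fun b hb => by simp [← h b hb]

end

theorem stmt6_general (X : Set (ℤ → 𝔞))
    (g : FreeGroup 𝔞) (hg : (tD X g).Nonempty) :
    (∃ μ : List 𝔞, g = embWord μ) ∨ (∃ μ : List 𝔞, g⁻¹ = embWord μ) := by
  obtain ⟨s, hs⟩ :=
    (FreeGroup.isReduced_toWord.isChain_snd_of_twordDom_nonempty hg).exists_forall_snd_eq
  rw [← FreeGroup.mk_toWord (x := g), FreeGroup.inv_mk]
  cases s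
  · exact .inr ⟨_, FreeGroup.mk_eq_embWord (by simpa [FreeGroup.invRev] using hs)⟩
  · exact .inl ⟨_, FreeGroup.mk_eq_embWord hs⟩

/-- For a two-sided symbolic dynamical system, if `D_g ≠ ∅` then `g` or `g⁻¹`
lies in the positive cone `𝔞*` of the free group. -/
theorem stmt6 (X : Set (ℤ → 𝔞)) (hX : tshift '' X = X)
    (g : FreeGroup 𝔞) (hg : (tD X g).Nonempty) :
    (∃ μ : List 𝔞, g = embWord μ) ∨ (∃ μ : List 𝔞, g⁻¹ = embWord μ) :=
  stmt6_general X g hg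
end

section
/- Let (X, θ, G) be a discrete partial dynamical system, (s_g)_{g∈G} the generators of C*(X, θ, G), and Λ the Boolean homomorphism extending D_g ↦ s_g s_g*. Then for every A in the Boolean algebra B(X, θ, G) generated by the domains and every g ∈ G, Λ(θ_g(A)) = s_g Λ(A) s_g*. -/
/-- A partial action of a group `G` on a set `X`. -/
structure PartialAction (G : Type*) [Group G] (X : Type*) where
  D : G → Set X
  act : G → X → X
  D_one : D 1 = Set.univ
  act_one : ∀ x, act 1 x = x
  bijOn : ∀ g, Set.BijOn (act g) (D g⁻¹) (D g)
  image_inter : ∀ h i, act h '' (D h⁻¹ ∩ D i) = D h ∩ D (h * i)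
  comp : ∀ h i x, x ∈ D i⁻¹ ∩ D (i⁻¹ * h⁻¹) → act h (act i x) = act (h * i) x

/-- The Boolean algebra of subsets of `X` generated by a family `S` of subsets:
the smallest family containing `S` and closed under intersection and
complement (and hence under union), containing `univ`. -/
inductive BoolGen {X : Type*} (S : Set (Set X)) : Set X → Prop
  | basic {A : Set X} : A ∈ S → BoolGen S A
  | univ : BoolGen S Set.univ
  | inter {A B : Set X} : BoolGen S A → BoolGen S B → BoolGen S (A ∩ B)
  | compl {A : Set X} : BoolGen S A → BoolGen S Aᶜ

/-- Lemma: in any unital C*-algebra with elements `(s_g)` satisfying the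
defining relations of `C*(X, θ, G)` and a Boolean homomorphism `Λ` extending
`D_g ↦ s_g s_g*`, one has `Λ(θ_g(A)) = s_g Λ(A) s_g*` for all `A` in the
Boolean algebra generated by the domains and all `g ∈ G`. -/
theorem stmt7 {G X : Type*} [Group G] (P : PartialAction G X)
    {A : Type*} [CStarAlgebra A] (s : G → A)
    (h_pi : ∀ g, s g * star (s g) * s g = s g)
    (h_comm : ∀ g h, s g * star (s g) * (s h * star (s h)) =
      s h * star (s h) * (s g * star (s g)))
    (h_one : s 1 = 1)
    (h_star : ∀ g, s g⁻¹ = star (s g))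
    (h_rel : ∀ h i, s h * s i = s h * star (s h) * s (h * i))
    (Λ : Set X → A)
    (hΛD : ∀ g, Λ (P.D g) = s g * star (s g))
    (hΛinter : ∀ B C : Set X, BoolGen (Set.range P.D) B →
      BoolGen (Set.range P.D) C → Λ (B ∩ C) = Λ B * Λ C)
    (hΛcompl : ∀ B : Set X, BoolGen (Set.range P.D) B → Λ Bᶜ = 1 - Λ B) :
    ∀ B : Set X, BoolGen (Set.range P.D) B → ∀ g : G,
      Λ (P.act g '' (P.D g⁻¹ ∩ B)) = s g * Λ B * star (s g) := by
  set f : G → A := fun g => s g * star (s g) with hf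
  have hfsa : ∀ g, star (f g) = f g := fun g => by simp [hf, mul_assoc]
  have hfid : ∀ g, f g * f g = f g := fun g => by
    show (s g * star (s g)) * (s g * star (s g)) = s g * star (s g)
    rw [← mul_assoc, h_pi]
  have hfinv : ∀ g, f g⁻¹ = star (s g) * s g := fun g => by
    simp [hf, h_star]
  have hsfinv : ∀ g, s g * f g⁻¹ = s g := fun g => by
    rw [hfinv, ← mul_assoc, h_pi]
  have hfs : ∀ g, f g * s g = s g := fun g => h_pi g
  have hΛuniv : Λ Set.univ = 1 := by
    rw [← P.D_one, hΛD, h_one, star_one, one_mul]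
  have hDmem : ∀ g, BoolGen (Set.range P.D) (P.D g) := fun g => BoolGen.basic ⟨g, rfl⟩
  -- set identities
  have hset_univ : ∀ g : G, P.act g '' (P.D g⁻¹ ∩ Set.univ) = P.D g := fun g => by
    rw [Set.inter_univ, (P.bijOn g).image_eq]
  have hset_inter : ∀ (g : G) (B C : Set X), P.act g '' (P.D g⁻¹ ∩ (B ∩ C)) =
      (P.act g '' (P.D g⁻¹ ∩ B)) ∩ (P.act g '' (P.D g⁻¹ ∩ C)) := fun g B C => by
    rw [show P.D g⁻¹ ∩ (B ∩ C) = (P.D g⁻¹ ∩ B) ∩ (P.D g⁻¹ ∩ C) by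
      ext x; simp only [Set.mem_inter_iff]; tauto]
    exact (P.bijOn g).injOn.image_inter Set.inter_subset_left Set.inter_subset_left
  have hset_compl : ∀ (g : G) (B : Set X), P.act g '' (P.D g⁻¹ ∩ Bᶜ) =
      P.D g ∩ (P.act g '' (P.D g⁻¹ ∩ B))ᶜ := fun g B => by
    have h1 : P.D g⁻¹ ∩ Bᶜ = P.D g⁻¹ \ (P.D g⁻¹ ∩ B) := by
      ext x; simp only [Set.mem_inter_iff, Set.mem_diff, Set.mem_compl_iff]; tauto
    rw [h1, (P.bijOn g).injOn.image_diff, (P.bijOn g).image_eq,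
      show P.D g⁻¹ ∩ (P.D g⁻¹ ∩ B) = P.D g⁻¹ ∩ B from
        Set.inter_eq_right.mpr Set.inter_subset_left, Set.diff_eq]
  -- θ_g preserves the Boolean algebra
  have htheta : ∀ B : Set X, BoolGen (Set.range P.D) B → ∀ g : G,
      BoolGen (Set.range P.D) (P.act g '' (P.D g⁻¹ ∩ B)) := by
    intro B hB
    induction hB with
    | @basic C h =>
      intro g; obtain ⟨i, rfl⟩ := h
      rw [P.image_inter]
      exact (hDmem g).inter (hDmem (g * i))
    | univ => intro g; rw [hset_univ]; exact hDmem g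
    | inter hB hC ihB ihC => intro g; rw [hset_inter]; exact (ihB g).inter (ihC g)
    | compl hB ih => intro g; rw [hset_compl]; exact (hDmem g).inter (ih g).compl
  -- Λ of sets in the Boolean algebra commutes with all f h
  have hcomm : ∀ B : Set X, BoolGen (Set.range P.D) B → ∀ g : G,
      Λ B * f g = f g * Λ B := by
    intro B hB
    induction hB with
    | @basic C h =>
      intro g; obtain ⟨i, rfl⟩ := h
      rw [hΛD]; exact h_comm i g
    | univ => intro g; rw [hΛuniv, one_mul, mul_one]
    | inter hB hC ihB ihC =>
      intro g
      rw [hΛinter _ _ hB hC, mul_assoc, ihC, ← mul_assoc, ihB, mul_assoc]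
    | compl hB ih =>
      intro g
      rw [hΛcompl _ hB, sub_mul, mul_sub, one_mul, mul_one, ih]
  -- main induction
  intro B hB
  induction hB with
  | @basic C h =>
    intro g; obtain ⟨i, rfl⟩ := h
    rw [P.image_inter, hΛinter _ _ (hDmem g) (hDmem (g * i)), hΛD, hΛD, hΛD]
    show f g * f (g * i) = s g * f i * star (s g)
    symm
    calc s g * f i * star (s g)
        = (s g * s i) * star (s g * s i) := by
          simp only [hf, star_mul, mul_assoc]
      _ = (f g * s (g * i)) * star (f g * s (g * i)) := by rw [← h_rel]
      _ = f g * (f (g * i) * star (f g)) := by simp only [hf, star_mul, mul_assoc]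
      _ = f g * (f (g * i) * f g) := by rw [hfsa]
      _ = f g * (f g * f (g * i)) := by
          rw [show f (g * i) * f g = f g * f (g * i) from h_comm (g * i) g]
      _ = (f g * f g) * f (g * i) := (mul_assoc (f g) (f g) (f (g * i))).symm
      _ = f g * f (g * i) := by rw [hfid]
  | univ =>
    intro g
    rw [hset_univ, hΛD, hΛuniv, mul_one]
  | @inter B C hB hC ihB ihC =>
    intro g
    rw [hset_inter, hΛinter _ _ (htheta _ hB g) (htheta _ hC g), ihB g, ihC g,
      hΛinter _ _ hB hC]
    calc (s g * Λ B * star (s g)) * (s g * Λ C * star (s g))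
        = s g * (Λ B * (star (s g) * s g)) * (Λ C * star (s g)) := by
          simp only [mul_assoc]
      _ = s g * (Λ B * f g⁻¹) * (Λ C * star (s g)) := by rw [hfinv]
      _ = s g * (f g⁻¹ * Λ B) * (Λ C * star (s g)) := by rw [hcomm _ hB]
      _ = (s g * f g⁻¹) * (Λ B * Λ C * star (s g)) := by simp only [mul_assoc]
      _ = s g * (Λ B * Λ C) * star (s g) := by rw [hsfinv]; simp only [mul_assoc]
  | @compl B hB ih =>
    intro g
    rw [hset_compl, hΛinter _ _ (hDmem g) (htheta _ hB g).compl, hΛD,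
      hΛcompl _ (htheta _ hB g), ih g, hΛcompl _ hB]
    show f g * (1 - s g * Λ B * star (s g)) = s g * (1 - Λ B) * star (s g)
    have l : f g * (s g * Λ B * star (s g)) = s g * Λ B * star (s g) := by
      rw [← mul_assoc, ← mul_assoc, hfs]
    rw [mul_sub, mul_one, l, mul_sub, mul_one, sub_mul]
end

section
/- The map A ↦ P_A, sending a subset A ⊆ X to the orthogonal projection of ℓ²(X) onto the closed span of {e_x : x ∈ A}, is a Boolean homomorphism from the power set of X (hence from any Boolean algebra of subsets of X) to the Boolean algebra of projections of B(ℓ²(X)), and it is injective. In particular the Boolean homomorphism Λ : B(X,θ,G) → projections, extending D_g ↦ s_g s_g*, is injective for every discrete partial dynamical system, so C*(X,θ,G) ≠ 0 when X ≠ ∅. -/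
open scoped ENNReal

theorem tsum_indicator_comp_of_bijOn {X M : Type*} [AddCommMonoid M] [TopologicalSpace M]
    {s t : Set X} {φ : X → X} (hφ : Set.BijOn φ s t) (F : X → M) :
    ∑' x, s.indicator (F ∘ φ) x = ∑' y, t.indicator F y := by
  rw [← tsum_subtype, ← tsum_subtype]
  exact (hφ.equiv φ).tsum_eq fun y : t => F y

namespace PartialAction

variable {G X : Type*} [Group G] (P : PartialAction G X) {g : G} {x : X}

theorem act_inv_act (hx : x ∈ P.D g⁻¹) : P.act g⁻¹ (P.act g x) = x := by
  rw [P.comp g⁻¹ g x ⟨hx, by simp [P.D_one]⟩, inv_mul_cancel, P.act_one]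

theorem act_act_inv (hx : x ∈ P.D g) : P.act g (P.act g⁻¹ x) = x := by
  simpa using P.act_inv_act (g := g⁻¹) (by rwa [inv_inv])

theorem act_inv_mem (hx : x ∈ P.D g) : P.act g⁻¹ x ∈ P.D g⁻¹ :=
  (P.bijOn g⁻¹).mapsTo (by rwa [inv_inv])

end PartialAction

namespace lp

section NormedSpace

variable {X 𝕜 E : Type*} [NormedField 𝕜] [NormedAddCommGroup E] [NormedSpace 𝕜 E]
  {p : ℝ≥0∞} [Fact (1 ≤ p)]

def IsIndicatorOperator (T : lp (fun _ : X => E) p →L[𝕜] lp (fun _ : X => E) p) (A : Set X) :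
    Prop :=
  ∀ f x, T f x = A.indicator f x

namespace IsIndicatorOperator

variable {T T' : lp (fun _ : X => E) p →L[𝕜] lp (fun _ : X => E) p} {A B : Set X}

theorem unique (hT : IsIndicatorOperator T A) (hT' : IsIndicatorOperator T' A) : T = T' := by
  ext f x
  rw [hT, hT']

theorem one : IsIndicatorOperator (1 : lp (fun _ : X => E) p →L[𝕜] _) Set.univ := by
  intro f x
  simp

theorem zero : IsIndicatorOperator (0 : lp (fun _ : X => E) p →L[𝕜] _) ∅ := by
  intro f x
  simp

theorem mul (hT : IsIndicatorOperator T A) (hT' : IsIndicatorOperator T' B) :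
    IsIndicatorOperator (T * T') (A ∩ B) := by
  intro f x
  have hT'f : ⇑(T' f) = B.indicator f := funext (hT' f)
  rw [← Set.indicator_indicator, ← hT'f, ← hT]
  rfl

theorem one_sub (hT : IsIndicatorOperator T A) : IsIndicatorOperator (1 - T) Aᶜ := by
  intro f x
  rw [Set.indicator_compl, Pi.sub_apply, ← hT]
  rfl

theorem set_eq [Nontrivial E] (hA : IsIndicatorOperator T A) (hB : IsIndicatorOperator T B) :
    A = B := by
  classical
  obtain ⟨e, he⟩ := exists_ne (0 : E)
  ext x
  have hx := (hA (lp.single p x e) x).symm.trans (hB (lp.single p x e) x)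
  simp only [Set.indicator_apply, lp.single_apply_self] at hx
  by_cases hxA : x ∈ A <;> by_cases hxB : x ∈ B <;> simp_all

end IsIndicatorOperator

section PartialShift

variable {G : Type*} [Group G]

def IsPartialShift (P : PartialAction G X) (g : G)
    (T : lp (fun _ : X => E) p →L[𝕜] lp (fun _ : X => E) p) : Prop :=
  ∀ f x, T f x = (P.D g).indicator (fun y => f (P.act g⁻¹ y)) x

variable {P : PartialAction G X} {g : G}
  {T T' : lp (fun _ : X => E) p →L[𝕜] lp (fun _ : X => E) p}

theorem IsPartialShift.mul_inv (hT : IsPartialShift P g T) (hT' : IsPartialShift P g⁻¹ T') :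
    IsIndicatorOperator (T * T') (P.D g) := by
  intro f x
  show T (T' f) x = _
  rw [hT]
  refine congrFun (Set.indicator_congr fun y hy => ?_) x
  rw [hT', Set.indicator_of_mem (P.act_inv_mem hy), inv_inv, P.act_act_inv hy]

end PartialShift

end NormedSpace

section InnerProductSpace

variable {G X 𝕜 E : Type*} [Group G] [RCLike 𝕜] [NormedAddCommGroup E] [InnerProductSpace 𝕜 E]
  [CompleteSpace E] {P : PartialAction G X} {g : G}
  {T T' : lp (fun _ : X => E) 2 →L[𝕜] lp (fun _ : X => E) 2}

theorem IsPartialShift.adjoint_eq (hT : IsPartialShift P g T) (hT' : IsPartialShift P g⁻¹ T') :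
    T.adjoint = T' := by
  refine ((ContinuousLinearMap.eq_adjoint_iff T' T).2 fun f h => ?_).symm
  set F : X → 𝕜 := fun y => inner 𝕜 (f y) (h (P.act g⁻¹ y))
  have hL : ∀ x, inner 𝕜 (T' f x) (h x) = (P.D g⁻¹).indicator (F ∘ P.act g) x := by
    intro x
    rw [hT', inv_inv]
    by_cases hx : x ∈ P.D g⁻¹
    · simp [Set.indicator_of_mem hx, F, P.act_inv_act hx]
    · simp [Set.indicator_of_notMem hx]
  have hR : ∀ x, inner 𝕜 (f x) (T h x) = (P.D g).indicator F x := by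
    intro x
    rw [hT]
    by_cases hx : x ∈ P.D g
    · simp [Set.indicator_of_mem hx, F]
    · simp [Set.indicator_of_notMem hx]
  rw [lp.inner_eq_tsum, lp.inner_eq_tsum, tsum_congr hL, tsum_congr hR,
    tsum_indicator_comp_of_bijOn (P.bijOn g)]

end InnerProductSpace

end lp

open lp

theorem stmt12_general {G X : Type*} [Group G] (P : PartialAction G X)
    (Pr : Set X → (lp (fun _ : X => ℂ) 2 →L[ℂ] lp (fun _ : X => ℂ) 2))
    (hPr : ∀ (A : Set X) (f : lp (fun _ : X => ℂ) 2) (x : X),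
      (Pr A f) x = Set.indicator A (fun y => f y) x)
    (S : G → (lp (fun _ : X => ℂ) 2 →L[ℂ] lp (fun _ : X => ℂ) 2))
    (hS : ∀ (g : G) (f : lp (fun _ : X => ℂ) 2) (x : X),
      (S g f) x = Set.indicator (P.D g) (fun y => f (P.act g⁻¹ y)) x) :
    (∀ A B : Set X, Pr (A ∩ B) = Pr A * Pr B) ∧
    (∀ A : Set X, Pr Aᶜ = 1 - Pr A) ∧
    Function.Injective Pr ∧
    (∀ g : G, Pr (P.D g) = S g * star (S g)) ∧
    (Nonempty X →
      (1 : lp (fun _ : X => ℂ) 2 →L[ℂ] lp (fun _ : X => ℂ) 2) ≠ 0) := by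
  have hPr' : ∀ A, IsIndicatorOperator (Pr A) A := hPr
  have hS' : ∀ g, IsPartialShift P g (S g) := hS
  refine ⟨fun A B => (hPr' _).unique ((hPr' A).mul (hPr' B)),
    fun A => (hPr' _).unique (hPr' A).one_sub,
    fun A B hAB => (hPr' A).set_eq (hAB ▸ hPr' B),
    fun g => ?_, fun ⟨x⟩ h10 => ?_⟩
  · rw [ContinuousLinearMap.star_eq_adjoint, (hS' g).adjoint_eq (hS' g⁻¹)]
    exact (hPr' _).unique ((hS' g).mul_inv (hS' g⁻¹))
  · have h0 : IsIndicatorOperator (1 : lp (fun _ : X => ℂ) 2 →L[ℂ] _) ∅ := h10 ▸ .zero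
    exact (Set.univ_eq_empty_iff.1 (IsIndicatorOperator.one.set_eq h0)).false x

/-- The map `A ↦ P_A`, sending `A ⊆ X` to the orthogonal projection of `ℓ²(X)`
onto the closed span of `{e_x : x ∈ A}` (characterized by
`(P_A f)(x) = f(x)` for `x ∈ A` and `0` otherwise), is an injective Boolean
homomorphism into the projections of `B(ℓ²(X))`:
`P_{A ∩ B} = P_A P_B` and `P_{Aᶜ} = 1 - P_A`.  In particular, for a discrete
partial dynamical system `(X, θ, G)` with operators `S_g` as in the canonical
`ℓ²(X)`-representation, the Boolean homomorphism `Λ = P_{(-)}` extending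
`D_g ↦ S_g S_g*` is injective, and (for `X ≠ ∅`) the represented algebra is
nonzero. -/
theorem stmt12 {G X : Type*} [Group G] [DecidableEq X] (P : PartialAction G X)
    (Pr : Set X → (lp (fun _ : X => ℂ) 2 →L[ℂ] lp (fun _ : X => ℂ) 2))
    (hPr : ∀ (A : Set X) (f : lp (fun _ : X => ℂ) 2) (x : X),
      (Pr A f) x = Set.indicator A (fun y => f y) x)
    (S : G → (lp (fun _ : X => ℂ) 2 →L[ℂ] lp (fun _ : X => ℂ) 2))
    (hS : ∀ (g : G) (f : lp (fun _ : X => ℂ) 2) (x : X),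
      (S g f) x = Set.indicator (P.D g) (fun y => f (P.act g⁻¹ y)) x) :
    (∀ A B : Set X, Pr (A ∩ B) = Pr A * Pr B) ∧
    (∀ A : Set X, Pr Aᶜ = 1 - Pr A) ∧
    Function.Injective Pr ∧
    (∀ g : G, Pr (P.D g) = S g * star (S g)) ∧
    (Nonempty X →
      (1 : lp (fun _ : X => ℂ) 2 →L[ℂ] lp (fun _ : X => ℂ) 2) ≠ 0) :=
  stmt12_general P Pr hPr S hS
end

section
/- Let X be a two-sided shift space over a finite alphabet with property (**) (finitely many left special elements, none of them periodic). If z ∈ X is right shift tail equivalent to a left special element of X, then the one-sided sequence π(z) = (z_n)_{n≥0} is not eventually periodic. -/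
variable {𝔞 : Type*}

/-- The projection `π : 𝔞^ℤ → 𝔞^ℕ`, `π(z) = (z_n)_{n ≥ 0}`. -/
def projSeq (z : ℤ → 𝔞) : ℕ → 𝔞 := fun n => z n

/-- `z ∈ X` is left special if some `z' ∈ X` has the same projection
`π(z') = π(z)` but `z'_{-1} ≠ z_{-1}`. -/
def LeftSpecial (X : Set (ℤ → 𝔞)) (z : ℤ → 𝔞) : Prop :=
  z ∈ X ∧ ∃ z' ∈ X, projSeq z' = projSeq z ∧ z' (-1) ≠ z (-1)

/-- `z ∈ 𝔞^ℤ` is periodic: `z_{n+m} = z_n` for all `n`, for some `m ≥ 1`. -/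
def IsPeriodic (z : ℤ → 𝔞) : Prop :=
  ∃ m : ℕ, 0 < m ∧ ∀ n : ℤ, z (n + m) = z n

/-- `z` and `z'` are right shift tail equivalent: there are `m, N ∈ ℤ` with
`z_n = z'_{n+m}` for all `n > N`. -/
def RightTailEquiv (z z' : ℤ → 𝔞) : Prop :=
  ∃ m N : ℤ, ∀ n : ℤ, n > N → z n = z' (n + m)

/-- `x ∈ 𝔞^ℕ` is eventually periodic: there are `k ≥ 1` and `N` with
`x_{n+k} = x_n` for all `n > N`. -/
def EventuallyPeriodic (x : ℕ → 𝔞) : Prop :=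
  ∃ k N : ℕ, 0 < k ∧ ∀ n : ℕ, n > N → x (n + k) = x n

/-- `P_l(w)`, the set of words of length `l` preceding `w` in `X⁺ = π(X)`. -/
def Pword (Xplus : Set (ℕ → 𝔞)) (l : ℕ) (w : ℕ → 𝔞) : Set (List 𝔞) :=
  {μ | μ.length = l ∧ wordCons μ w ∈ Xplus}

/-- Property `(*)`: for every word `μ` in the language of `X⁺` there exists
`x ∈ X⁺` with `P_{|μ|}(x) = {μ}`. -/
def PropertyStar (X : Set (ℤ → 𝔞)) : Prop :=
  ∀ μ : List 𝔞,
    (∃ x ∈ projSeq '' X, ∃ k : ℕ, ∀ i : Fin μ.length, x (k + i) = μ.get i) →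
    ∃ x ∈ projSeq '' X, Pword (projSeq '' X) μ.length x = {μ}

/-!
Since `π(z)` is eventually periodic and `z` is right tail equivalent to `z'`, the sequence `z'`
is eventually periodic to the right, with arbitrarily large periods `p`. Being left special, `z'`
is not periodic, so its shifts `τ^t z'` are pairwise distinct: for large `a`, `τ^a z'` and
`τ^(a+p) z'` differ although they agree on all coordinates `≥ 0`. Shifting both until their last
disagreement sits at coordinate `-1` yields two left special shifts `τ^s z'` and `τ^(s+p) z'`.
Only finitely many shifts of `z'` are left special, which bounds `p`: a contradiction.
-/

/-- `shiftBy z t = τ^t z`, for every `t ∈ ℤ`. -/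
def shiftBy (z : ℤ → 𝔞) (t : ℤ) : ℤ → 𝔞 := fun n => z (n + t)

section Shift

variable {z : ℤ → 𝔞}

@[simp]
theorem shiftBy_zero (z : ℤ → 𝔞) : shiftBy z 0 = z := by
  funext n
  simp [shiftBy]

theorem shiftBy_shiftBy (z : ℤ → 𝔞) (s t : ℤ) : shiftBy (shiftBy z s) t = shiftBy z (s + t) := by
  funext n
  simp only [shiftBy]
  ring_nf

theorem tshift_eq_shiftBy_one (z : ℤ → 𝔞) : tshift z = shiftBy z 1 := rfl

theorem shiftBy_mem {X : Set (ℤ → 𝔞)} (hX : tshift '' X = X) (hz : z ∈ X) (t : ℤ) :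
    shiftBy z t ∈ X := by
  induction t using Int.induction_on with
  | zero => simpa using hz
  | succ i ih =>
    rw [← hX, ← shiftBy_shiftBy]
    exact ⟨_, ih, rfl⟩
  | pred i ih =>
    rw [← hX] at ih
    obtain ⟨u, hu, hue⟩ := ih
    have : shiftBy z (-i - 1) = u := by
      rw [sub_eq_add_neg, ← shiftBy_shiftBy, ← hue, tshift_eq_shiftBy_one, shiftBy_shiftBy]
      simp
    exact this ▸ hu

theorem isPeriodic_of_shiftBy_eq {s t : ℤ} (hst : s < t) (h : shiftBy z s = shiftBy z t) :
    IsPeriodic z := by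
  refine ⟨(t - s).toNat, by omega, fun n => ?_⟩
  have := congrFun h (n - s)
  simp only [shiftBy] at this
  rw [Int.toNat_of_nonneg (by omega)]
  convert this.symm using 2 <;> ring

theorem shiftBy_injective (hz : ¬ IsPeriodic z) : Function.Injective (shiftBy z) := by
  intro s t h
  rcases lt_trichotomy s t with hlt | heq | hgt
  · exact absurd (isPeriodic_of_shiftBy_eq hlt h) hz
  · exact heq
  · exact absurd (isPeriodic_of_shiftBy_eq hgt h.symm) hz

end Shift

/-- Two sequences that differ, but agree from coordinate `0` on, become a left special pair once
shifted so that their last disagreement sits at coordinate `-1`. -/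
theorem exists_shiftBy_projSeq_eq {u v : ℤ → 𝔞} (hne : u ≠ v)
    (hagree : ∀ n, 0 ≤ n → u n = v n) :
    ∃ d, projSeq (shiftBy u d) = projSeq (shiftBy v d) ∧ shiftBy u d (-1) ≠ shiftBy v d (-1) := by
  obtain ⟨D, hD, hmax⟩ := Int.exists_greatest_of_bdd (P := fun n => u n ≠ v n)
    ⟨-1, fun n hn => by by_contra h; exact hn (hagree n (by omega))⟩ (Function.ne_iff.mp hne)
  refine ⟨D + 1, funext fun n => ?_, by simpa [shiftBy] using hD⟩
  by_contra h
  have := hmax _ h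
  omega

theorem RightTailEquiv.exists_eventual_period {z z' : ℤ → 𝔞} (hrt : RightTailEquiv z z')
    (hper : EventuallyPeriodic (projSeq z)) :
    ∃ k : ℕ, 0 < k ∧ ∃ M : ℤ, ∀ q, M < q → z' (q + k) = z' q := by
  obtain ⟨k, N, hk, hper⟩ := hper
  obtain ⟨m, N', hrt⟩ := hrt
  refine ⟨k, hk, max N' N + m, fun q hq => ?_⟩
  obtain ⟨n, hn⟩ : ∃ n : ℕ, (n : ℤ) = q - m := ⟨(q - m).toNat, Int.toNat_of_nonneg (by omega)⟩
  have h := hper n (by omega)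
  simp only [projSeq, Nat.cast_add] at h
  calc z' (q + k) = z (n + k) := by rw [hrt _ (by omega)]; congr 1; omega
    _ = z n := h
    _ = z' q := by rw [hrt _ (by omega)]; congr 1; omega

theorem exists_large_eventual_period {z : ℤ → 𝔞} {M : ℤ} {k : ℕ} (hk : 0 < k)
    (h : ∀ q, M < q → z (q + k) = z q) (B : ℤ) :
    ∃ p, B < p ∧ ∀ q, M < q → z (q + p) = z q := by
  have hmul : ∀ j : ℕ, ∀ q, M < q → z (q + j * k) = z q := by
    intro j
    induction j with
    | zero => simp
    | succ j ih =>
      intro q hq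
      have hjk : (0 : ℤ) ≤ j * k := by positivity
      rw [show q + ((j + 1 : ℕ) : ℤ) * k = q + j * k + k by push_cast; ring,
        h _ (by omega), ih q hq]
  refine ⟨(B.toNat + 1 : ℕ) * k, ?_, hmul _⟩
  have : (1 : ℤ) ≤ k := by exact_mod_cast hk
  push_cast
  nlinarith [Int.self_le_toNat B]

theorem stmt18_general
    (X : Set (ℤ → 𝔞)) (hX : tshift '' X = X)
    (hfin : {z : ℤ → 𝔞 | LeftSpecial X z}.Finite)
    (hnp : ∀ z : ℤ → 𝔞, LeftSpecial X z → ¬ IsPeriodic z)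
    (z z' : ℤ → 𝔞) (hz' : LeftSpecial X z')
    (hrt : RightTailEquiv z z') :
    ¬ EventuallyPeriodic (projSeq z) := by
  intro hper
  have hinj := shiftBy_injective (hnp z' hz')
  have hS : {t | LeftSpecial X (shiftBy z' t)}.Finite := hfin.preimage hinj.injOn
  obtain ⟨hi, hhi⟩ := hS.bddAbove
  obtain ⟨lo, hlo⟩ := hS.bddBelow
  obtain ⟨k, hk, M, hM⟩ := hrt.exists_eventual_period hper
  obtain ⟨p, hp, hpM⟩ := exists_large_eventual_period hk hM (max (hi - lo) 0)
  have hne : shiftBy z' (M + 1) ≠ shiftBy z' (M + 1 + p) := hinj.ne (by omega)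
  obtain ⟨d, hproj, hlast⟩ := exists_shiftBy_projSeq_eq hne fun n hn => by
    show z' (n + (M + 1)) = z' (n + (M + 1 + p))
    rw [← add_assoc n (M + 1) p, hpM _ (by omega)]
  rw [shiftBy_shiftBy, shiftBy_shiftBy] at hproj hlast
  have hmem := shiftBy_mem hX hz'.1
  have h₁ := hlo ⟨hmem _, _, hmem _, hproj.symm, hlast.symm⟩
  have h₂ := hhi ⟨hmem (M + 1 + p + d), _, hmem _, hproj, hlast⟩
  omega

/-- If `X` is a two-sided shift space over a finite alphabet with property
`(**)` (property `(*)`, finitely many left special elements, none of them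
periodic) and `z ∈ X` is right shift tail equivalent to a left special
element, then `π(z)` is not eventually periodic. -/
theorem stmt18 [Finite 𝔞] [TopologicalSpace 𝔞] [DiscreteTopology 𝔞]
    (X : Set (ℤ → 𝔞)) (hXcl : IsClosed X) (hX : tshift '' X = X)
    (hstar : PropertyStar X)
    (hfin : {z : ℤ → 𝔞 | LeftSpecial X z}.Finite)
    (hnp : ∀ z : ℤ → 𝔞, LeftSpecial X z → ¬ IsPeriodic z)
    (z z' : ℤ → 𝔞) (hz : z ∈ X) (hz' : LeftSpecial X z')
    (hrt : RightTailEquiv z z') :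
    ¬ EventuallyPeriodic (projSeq z) :=
  stmt18_general X hX hfin hnp z z' hz' hrt
end

section
/- Let u be a map from a group G to a unital C*-algebra A. Then the following are equivalent: (1) u(e) = 1, u(g⁻¹) = u(g)* for all g, and u(h)u(i)u(i⁻¹) = u(hi)u(i⁻¹) for all h,i; (2) (u(g))_{g∈G} is a family of partial isometries with commuting range projections, u(e)u(e)* = 1, u(g)*u(g) = u(g⁻¹)u(g⁻¹)* for all g, and u(h)u(i)u(i)*u(h)* = u(h)u(i)u(hi)* for all h,i; (3) (u(g))_{g∈G} is a family of partial isometries with commuting range projections, u(e) = 1, u(g)* = u(g⁻¹) for all g, and u(h)u(i) = u(h)u(h)*u(hi) for all h,i. -/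
section

variable {G A : Type*} [Group G]

/-- Condition (1): `u(e) = 1`, `u(g⁻¹) = u(g)*`, and
`u(h)u(i)u(i⁻¹) = u(hi)u(i⁻¹)`. -/
def Cond1 [Monoid A] [StarMul A] (u : G → A) : Prop :=
  u 1 = 1 ∧ (∀ g : G, u g⁻¹ = star (u g)) ∧
    ∀ h i : G, u h * u i * u i⁻¹ = u (h * i) * u i⁻¹

/-- Condition (2): the `u(g)` are partial isometries with commuting range
projections, `u(e)u(e)* = 1`, `u(g)*u(g) = u(g⁻¹)u(g⁻¹)*`, and
`u(h)u(i)u(i)*u(h)* = u(h)u(i)u(hi)*`. -/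
def Cond2 [Monoid A] [StarMul A] (u : G → A) : Prop :=
  (∀ g : G, u g * star (u g) * u g = u g) ∧
  (∀ g h : G, u g * star (u g) * (u h * star (u h)) =
    u h * star (u h) * (u g * star (u g))) ∧
  u 1 * star (u 1) = 1 ∧
  (∀ g : G, star (u g) * u g = u g⁻¹ * star (u g⁻¹)) ∧
  ∀ h i : G, u h * u i * star (u i) * star (u h) = u h * u i * star (u (h * i))

/-- Condition (3): the `u(g)` are partial isometries with commuting range
projections, `u(e) = 1`, `u(g)* = u(g⁻¹)`, and `u(h)u(i) = u(h)u(h)*u(hi)`. -/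
def Cond3 [Monoid A] [StarMul A] (u : G → A) : Prop :=
  (∀ g : G, u g * star (u g) * u g = u g) ∧
  (∀ g h : G, u g * star (u g) * (u h * star (u h)) =
    u h * star (u h) * (u g * star (u g))) ∧
  u 1 = 1 ∧
  (∀ g : G, star (u g) = u g⁻¹) ∧
  ∀ h i : G, u h * u i = u h * star (u h) * u (h * i)

lemma cond1_to_cond3 [Monoid A] [StarMul A] (u : G → A) (hc : Cond1 u) : Cond3 u := by
  obtain ⟨h1, hs, hr⟩ := hc
  have hs' : ∀ g : G, star (u g⁻¹) = u g := fun g => by rw [hs, star_star]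
  have pi : ∀ g : G, u g * star (u g) * u g = u g := by
    intro g
    have H := hr g g⁻¹
    rw [inv_inv, mul_inv_cancel, h1, one_mul, hs g] at H
    exact H
  have rel3 : ∀ h i : G, u h * u i = u h * star (u h) * u (h * i) := by
    intro h i
    have key : star (u h) * (u h * u i) = star (u h) * u (h * i) := by
      have H := hr i⁻¹ h⁻¹
      rw [inv_inv, ← mul_inv_rev] at H
      have H2 := congrArg star H
      simp only [star_mul, hs', star_star, mul_assoc] at H2
      exact H2
    calc u h * u i = u h * star (u h) * u h * u i := by rw [pi]
    _ = u h * star (u h) * u (h * i) := by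
        rw [mul_assoc (u h * star (u h)), mul_assoc (u h), key, ← mul_assoc]
  have comm : ∀ g h : G, u g * star (u g) * (u h * star (u h)) =
      u h * star (u h) * (u g * star (u g)) := by
    have key1 : ∀ g h : G, u g * star (u g) * (u h * star (u h)) =
        u g * (u (g⁻¹ * h) * star (u (g⁻¹ * h))) * star (u g) := by
      intro g h
      have s1 : star (u g) * u h = star (u g) * u g * u (g⁻¹ * h) := by
        have H := rel3 g⁻¹ h
        rw [hs' g] at H
        rwa [hs g] at H
      have s2 : u (g⁻¹ * h) * star (u h) =
          u (g⁻¹ * h) * star (u (g⁻¹ * h)) * star (u g) := by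
        have H := rel3 (g⁻¹ * h) h⁻¹
        rw [mul_assoc g⁻¹, mul_inv_cancel, mul_one, hs h, hs g] at H
        exact H
      calc u g * star (u g) * (u h * star (u h))
          = u g * (star (u g) * u h) * star (u h) := by
            simp only [mul_assoc]
        _ = u g * (star (u g) * u g * u (g⁻¹ * h)) * star (u h) := by rw [s1]
        _ = (u g * star (u g) * u g) * (u (g⁻¹ * h) * star (u h)) := by
            simp only [mul_assoc]
        _ = u g * (u (g⁻¹ * h) * star (u (g⁻¹ * h)) * star (u g)) := by
            rw [pi, s2]
        _ = u g * (u (g⁻¹ * h) * star (u (g⁻¹ * h))) * star (u g) := by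
            simp only [mul_assoc]
    intro g h
    have sa : star (u g * (u (g⁻¹ * h) * star (u (g⁻¹ * h))) * star (u g)) =
        u g * (u (g⁻¹ * h) * star (u (g⁻¹ * h))) * star (u g) := by
      simp only [star_mul, star_star, mul_assoc]
    calc u g * star (u g) * (u h * star (u h))
        = star (u g * star (u g) * (u h * star (u h))) := by
          rw [key1 g h, sa]
      _ = u h * star (u h) * (u g * star (u g)) := by
          simp only [star_mul, star_star, mul_assoc]
  exact ⟨pi, comm, h1, fun g => (hs g).symm, rel3⟩

lemma cond3_to_cond2 [Monoid A] [StarMul A] (u : G → A) (hc : Cond3 u) : Cond2 u := by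
  obtain ⟨pi, comm, h1, hs, rel3⟩ := hc
  have idem : ∀ g : G, u g * star (u g) * (u g * star (u g)) = u g * star (u g) := by
    intro g
    calc u g * star (u g) * (u g * star (u g))
        = (u g * star (u g) * u g) * star (u g) := by simp only [mul_assoc]
      _ = u g * star (u g) := by rw [pi]
  refine ⟨pi, comm, by rw [h1, star_one, mul_one], ?_, ?_⟩
  · intro g
    have h2 : star (u g⁻¹) = u g := by rw [hs g⁻¹, inv_inv]
    rw [hs g, h2]
  · intro h i
    have e1 : u h * u i * star (u i) * star (u h) =
        u h * star (u h) * (u (h * i) * star (u (h * i))) * (u h * star (u h)) := by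
      calc u h * u i * star (u i) * star (u h)
          = (u h * u i) * star (u h * u i) := by simp only [star_mul, mul_assoc]
        _ = (u h * star (u h) * u (h * i)) * star (u h * star (u h) * u (h * i)) := by
            rw [rel3 h i]
        _ = u h * star (u h) * (u (h * i) * star (u (h * i))) * (u h * star (u h)) := by
            simp only [star_mul, star_star, mul_assoc]
    have e2 : u h * u i * star (u (h * i)) =
        u h * star (u h) * (u (h * i) * star (u (h * i))) := by
      rw [rel3 h i]; simp only [mul_assoc]
    rw [e1, e2]
    calc u h * star (u h) * (u (h * i) * star (u (h * i))) * (u h * star (u h))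
        = u (h * i) * star (u (h * i)) * (u h * star (u h)) * (u h * star (u h)) := by
          rw [comm h (h * i)]
      _ = u (h * i) * star (u (h * i)) * (u h * star (u h) * (u h * star (u h))) := by
          rw [mul_assoc]
      _ = u (h * i) * star (u (h * i)) * (u h * star (u h)) := by rw [idem]
      _ = u h * star (u h) * (u (h * i) * star (u (h * i))) := (comm h (h * i)).symm

lemma cond2_to_cond1 [CStarAlgebra A] (u : G → A) (hc : Cond2 u) : Cond1 u := by
  obtain ⟨pi, comm, h11, h4, h5⟩ := hc
  have idem : ∀ g : G, u g * star (u g) * (u g * star (u g)) = u g * star (u g) := by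
    intro g
    calc u g * star (u g) * (u g * star (u g))
        = (u g * star (u g) * u g) * star (u g) := by simp only [mul_assoc]
      _ = u g * star (u g) := by rw [pi]
  have h1 : u 1 = 1 := by
    have H := h5 1 1
    rw [mul_one] at H
    have L : u 1 * u 1 * star (u 1) * star (u 1) = 1 := by
      calc u 1 * u 1 * star (u 1) * star (u 1)
          = u 1 * (u 1 * star (u 1)) * star (u 1) := by simp only [mul_assoc]
        _ = 1 := by rw [h11, mul_one, h11]
    have R : u 1 * u 1 * star (u 1) = u 1 := by
      calc u 1 * u 1 * star (u 1) = u 1 * (u 1 * star (u 1)) := by rw [mul_assoc]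
        _ = u 1 := by rw [h11, mul_one]
    rw [R] at H
    exact H.symm.trans h11
  have hmi : ∀ g : G, u g * u g⁻¹ = u g * star (u g) := by
    intro g
    have H := h5 g g⁻¹
    rw [mul_inv_cancel, h1, star_one, mul_one] at H
    calc u g * u g⁻¹ = u g * u g⁻¹ * star (u g⁻¹) * star (u g) := H.symm
      _ = u g * (u g⁻¹ * star (u g⁻¹)) * star (u g) := by simp only [mul_assoc]
      _ = u g * (star (u g) * u g) * star (u g) := by rw [← h4]
      _ = (u g * star (u g)) * (u g * star (u g)) := by simp only [mul_assoc]
      _ = u g * star (u g) := idem g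
  have hs : ∀ g : G, u g⁻¹ = star (u g) := by
    intro g
    have a1 : star (u g⁻¹) * u g⁻¹ = u g * star (u g) := by
      have := h4 g⁻¹; rwa [inv_inv] at this
    have a2 : star (u g⁻¹) * star (u g) = u g * star (u g) := by
      calc star (u g⁻¹) * star (u g) = star (u g * u g⁻¹) := by rw [star_mul]
        _ = star (u g * star (u g)) := by rw [hmi g]
        _ = u g * star (u g) := by simp only [star_mul, star_star]
    have key : star (u g⁻¹ - star (u g)) * (u g⁻¹ - star (u g)) = 0 := by
      rw [star_sub, star_star, sub_mul, mul_sub, mul_sub, a1, a2, hmi g]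
      simp
    have := (CStarRing.star_mul_self_eq_zero_iff _).mp key
    exact sub_eq_zero.mp this
  have hs' : ∀ g : G, star (u g⁻¹) = u g := fun g => by rw [hs, star_star]
  refine ⟨h1, hs, ?_⟩
  intro h i
  rw [hs i]
  have pib : u i * star (u i) * u i = u i := pi i
  have pib' : star (u i) * u i * star (u i) = star (u i) := by
    have H := congrArg star (pi i)
    simp only [star_mul, star_star, mul_assoc] at H
    simpa only [mul_assoc] using H
  have T1 : (u h * u i * star (u i)) * (u i * (star (u i) * star (u h))) =
      u h * u i * star (u i) * star (u h) := by
    calc (u h * u i * star (u i)) * (u i * (star (u i) * star (u h)))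
        = u h * (u i * star (u i) * u i) * (star (u i) * star (u h)) := by
          simp only [mul_assoc]
      _ = u h * u i * (star (u i) * star (u h)) := by rw [pib]
      _ = u h * u i * star (u i) * star (u h) := by simp only [mul_assoc]
  have T2 : (u h * u i * star (u i)) * (u i * star (u (h * i))) =
      u h * u i * star (u (h * i)) := by
    calc (u h * u i * star (u i)) * (u i * star (u (h * i)))
        = u h * (u i * star (u i) * u i) * star (u (h * i)) := by
          simp only [mul_assoc]
      _ = u h * u i * star (u (h * i)) := by rw [pib]
  have T3 : (u (h * i) * star (u i)) * (u i * (star (u i) * star (u h))) =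
      u (h * i) * star (u i) * star (u h) := by
    calc (u (h * i) * star (u i)) * (u i * (star (u i) * star (u h)))
        = u (h * i) * (star (u i) * u i * star (u i)) * star (u h) := by
          simp only [mul_assoc]
      _ = u (h * i) * star (u i) * star (u h) := by rw [pib']
  have T4 : (u (h * i) * star (u i)) * (u i * star (u (h * i))) =
      u (h * i) * star (u i) * star (u h) := by
    have H := h5 (h * i) i⁻¹
    rw [mul_assoc h, mul_inv_cancel, mul_one, hs' i, hs i] at H
    calc (u (h * i) * star (u i)) * (u i * star (u (h * i)))
        = u (h * i) * star (u i) * u i * star (u (h * i)) := by simp only [mul_assoc]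
      _ = u (h * i) * star (u i) * star (u h) := H
  have T5 : u h * u i * star (u (h * i)) = u h * u i * star (u i) * star (u h) :=
    (h5 h i).symm
  have T6 : u (h * i) * star (u i) * star (u h) =
      u h * u i * star (u i) * star (u h) := by
    have H := congrArg star (h5 h i)
    simp only [star_mul, star_star, mul_assoc] at H
    calc u (h * i) * star (u i) * star (u h)
        = u (h * i) * (star (u i) * star (u h)) := by rw [mul_assoc]
      _ = u h * (u i * (star (u i) * star (u h))) := H.symm
      _ = u h * u i * star (u i) * star (u h) := by simp only [mul_assoc]
  have key : (u h * u i * star (u i) - u (h * i) * star (u i)) *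
      star (u h * u i * star (u i) - u (h * i) * star (u i)) = 0 := by
    have hstarz : star (u h * u i * star (u i) - u (h * i) * star (u i)) =
        u i * (star (u i) * star (u h)) - u i * star (u (h * i)) := by
      simp only [star_sub, star_mul, star_star, mul_assoc]
    rw [hstarz, sub_mul, mul_sub, mul_sub, T1, T2, T3, T4, T5, T6]
    simp
  have := (CStarRing.mul_star_self_eq_zero_iff _).mp key
  exact sub_eq_zero.mp this

/-- The three definitions of a partial representation of a group `G` in a
unital C*-algebra `A` are equivalent. -/
theorem stmt19 [CStarAlgebra A] (u : G → A) :
    (Cond1 u ↔ Cond2 u) ∧ (Cond2 u ↔ Cond3 u) ∧ (Cond1 u ↔ Cond3 u) := by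
  have h13 := cond1_to_cond3 u
  have h32 := cond3_to_cond2 u
  have h21 := cond2_to_cond1 u
  exact ⟨⟨fun h => h32 (h13 h), h21⟩,
    ⟨fun h => h13 (h21 h), h32⟩, ⟨h13, fun h => h21 (h32 h)⟩⟩


end
end
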